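/- arXiv:1011.6134 — 4 statements merged into one kernel-verified Lean document; each statement's English description precedes it below -/
import Mathlib

section
/- Let η : P([n]) → ℝ≥0 be a function on subsets of {1,...,n} with η([n]) ≥ α and Σ_{S⊆[n]} η(S) ≤ β, where 0 ≤ α ≤ β ≤ 1 and α > 0. Then there exist a set S ⊆ [n] and an element i ∉ S such that η(S∪{i})/η(S) ≥ (1−φ)/φ, where φ = 1 − (α/β)^{1/n}. -/
/-!
Suppose every ratio `η (insert i S) / η S` is below `c = (1 - φ) / φ`, and put `d = 1 / c`.
Walking from `S` up to `[n]` one element at a time gives `η S > d ^ (n - |S|) η [n]` for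
`S ≠ [n]`, so `β ≥ ∑ η S > (1 + d) ^ n η [n] ≥ α (1 + d) ^ n = α / (1 - φ) ^ n = β`.
-/

open Finset

section Chain

variable {α R : Type*} [Fintype α] [DecidableEq α]

theorem sum_pow_card_compl [CommSemiring R] (d : R) :
    ∑ S : Finset α, d ^ #Sᶜ = (1 + d) ^ Fintype.card α := by
  simpa [card_compl] using Fintype.sum_pow_mul_eq_add_pow α (1 : R) d

variable [CommSemiring R] [PartialOrder R] [IsStrictOrderedRing R]
  {d : R} {η : Finset α → R}

theorem pow_card_compl_mul_lt_of_forall_mul_insert_lt (hd : 0 < d)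
    (h : ∀ S i, i ∉ S → d * η (insert i S) < η S) :
    ∀ S : Finset α, S ≠ univ → d ^ #Sᶜ * η univ < η S := by
  suffices key : ∀ k (S : Finset α), #Sᶜ = k + 1 → d ^ (k + 1) * η univ < η S by
    intro S hS
    have hpos : 0 < #Sᶜ :=
      card_pos.2 <| nonempty_iff_ne_empty.2 <| (compl_eq_empty_iff S).not.2 hS
    obtain ⟨k, hk⟩ := Nat.exists_eq_add_one.2 hpos
    rw [hk]
    exact key k S hk
  intro k
  induction k with
  | zero =>
    intro S hS
    obtain ⟨i, hi⟩ := card_eq_one.1 hS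
    have hiS : i ∉ S := by simp [← mem_compl, hi]
    have hins : insert i S = univ := by
      rw [← compl_eq_empty_iff, compl_insert, hi, erase_singleton]
    simpa [hins] using h S i hiS
  | succ k ih =>
    intro S hS
    obtain ⟨i, hi⟩ := (card_pos (s := Sᶜ)).1 (by omega)
    have hcard : #(insert i S)ᶜ = k + 1 := by rw [compl_insert, card_erase_of_mem hi, hS]; rfl
    calc d ^ (k + 1 + 1) * η univ = d * (d ^ (k + 1) * η univ) := by ring
      _ < d * η (insert i S) := mul_lt_mul_of_pos_left (ih _ hcard) hd
      _ < η S := h S i (mem_compl.1 hi)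

theorem one_add_pow_card_mul_lt_sum_of_forall_mul_insert_lt [Nonempty α] (hd : 0 < d)
    (h : ∀ S i, i ∉ S → d * η (insert i S) < η S) :
    (1 + d) ^ Fintype.card α * η univ < ∑ S : Finset α, η S := by
  have hlt := pow_card_compl_mul_lt_of_forall_mul_insert_lt hd h
  rw [← sum_pow_card_compl, sum_mul]
  refine sum_lt_sum (fun S _ => ?_) ⟨∅, mem_univ _, hlt ∅ univ_nonempty.ne_empty.symm⟩
  rcases eq_or_ne S univ with rfl | hS
  · simp
  · exact (hlt S hS).le

end Chain

theorem stmt0_general (n : ℕ) (hn : 1 ≤ n) (η : Finset (Fin n) → ℝ)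
    (hpos : ∀ S : Finset (Fin n), 0 < η S)
    (α β : ℝ) (hα : 0 < α) (hαβ : α ≤ β)
    (hη : α ≤ η Finset.univ) (hsum : ∑ S : Finset (Fin n), η S ≤ β)
    (φ : ℝ) (hφ : φ = 1 - (α / β) ^ ((1 : ℝ) / (n : ℝ)))
    (hφ0 : 0 < φ) (hφ1 : φ < 1) :
    ∃ (S : Finset (Fin n)) (i : Fin n), i ∉ S ∧
      (1 - φ) / φ ≤ η (insert i S) / η S := by
  by_contra! hratio
  have : NeZero n := ⟨by omega⟩
  have hφ1' : 0 < 1 - φ := by linarith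
  have hd1 : 1 + φ / (1 - φ) = (1 - φ)⁻¹ := by field_simp; ring
  set d := φ / (1 - φ)
  have hstep : ∀ S i, i ∉ S → d * η (insert i S) < η S := fun S i hi => by
    have := hratio S i hi
    rw [div_lt_div_iff₀ (hpos S) hφ0] at this
    rw [div_mul_eq_mul_div, div_lt_iff₀ hφ1']
    linarith
  have hpow : (1 - φ) ^ n = α / β := by
    rw [hφ, sub_sub_cancel, one_div,
      Real.rpow_inv_natCast_pow (div_nonneg hα.le (hα.le.trans hαβ)) (NeZero.ne n)]
  have hlt := one_add_pow_card_mul_lt_sum_of_forall_mul_insert_lt (div_pos hφ0 hφ1') hstep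
  rw [Fintype.card_fin] at hlt
  have hβ : β = α * (1 + d) ^ n := by
    rw [hd1, inv_pow, hpow, inv_div, mul_div_cancel₀ _ hα.ne']
  have hαd : α * (1 + d) ^ n ≤ (1 + d) ^ n * η univ := by
    rw [mul_comm]
    exact mul_le_mul_of_nonneg_left hη (by positivity)
  linarith

/-- Lemma D.2 (hfunc). -/
theorem stmt0 (n : ℕ) (hn : 1 ≤ n) (η : Finset (Fin n) → ℝ)
    (hpos : ∀ S : Finset (Fin n), 0 < η S)
    (α β : ℝ) (hα : 0 < α) (hαβ : α ≤ β) (hβ : β ≤ 1)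
    (hη : α ≤ η Finset.univ) (hsum : ∑ S : Finset (Fin n), η S ≤ β)
    (φ : ℝ) (hφ : φ = 1 - (α / β) ^ ((1 : ℝ) / (n : ℝ)))
    (hφ0 : 0 < φ) (hφ1 : φ < 1) :
    ∃ (S : Finset (Fin n)) (i : Fin n), i ∉ S ∧
      (1 - φ) / φ ≤ η (insert i S) / η S :=
  stmt0_general n hn η hpos α β hα hαβ hη hsum φ hφ hφ0 hφ1
end

section
/- Suppose π is a probability distribution over subsets M ⊆ [n] such that π(M) > 0 for all M, π([n]) ≥ (1−γ)^n, and max over pairs (i, M with i∉M) of π(M∪{i})/π(M) is at most (1−γ)/γ, where γ ∈ (0,1). Then π(M) = γ^{n−|M|}(1−γ)^{|M|} for all M ⊆ [n]. In other words, the distribution π̄(M) = γ^{n−|M|}(1−γ)^{|M|} is the unique distribution with precision at least (1−γ)^n minimizing the worst-case coefficient max_{i∉M} π(M∪{i})/π(M). -/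
/-!
Chaining the coefficient bound `π (M ∪ {i}) ≤ ((1 - γ) / γ) π M` along the `n - |M|` elements
missing from `M` gives `π [n] ≤ ((1 - γ) / γ) ^ (n - |M|) π M`, so the precision bound forces
`π M ≥ γ ^ (n - |M|) (1 - γ) ^ |M|`. These lower bounds are the binomial weights, which already
sum to `(γ + (1 - γ)) ^ n = 1 = ∑ π`, so every one of them is attained.
-/

open Finset

variable {α : Type*} [DecidableEq α]

theorem le_pow_card_mul_of_insert_le {f : Finset α → ℝ} {c : ℝ} (hc : 0 ≤ c)
    (hf : ∀ M i, i ∉ M → f (insert i M) ≤ c * f M) {M s : Finset α} (hs : Disjoint s M) :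
    f (s ∪ M) ≤ c ^ #s * f M := by
  induction s using Finset.induction_on with
  | empty => simp
  | insert a s ha ih =>
    rw [disjoint_insert_left] at hs
    rw [insert_union, card_insert_of_notMem ha, pow_succ]
    calc f (insert a (s ∪ M)) ≤ c * f (s ∪ M) := hf _ _ (by simp [ha, hs.1])
      _ ≤ c * (c ^ #s * f M) := mul_le_mul_of_nonneg_left (ih hs.2) hc
      _ = c ^ #s * c * f M := by ring

theorem le_pow_card_compl_mul_of_insert_le [Fintype α] {f : Finset α → ℝ} {c : ℝ} (hc : 0 ≤ c)
    (hf : ∀ M i, i ∉ M → f (insert i M) ≤ c * f M) (M : Finset α) :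
    f univ ≤ c ^ (Fintype.card α - #M) * f M := by
  have h := le_pow_card_mul_of_insert_le hc hf (disjoint_compl_left (a := M))
  rwa [← sup_eq_union, compl_sup_eq_top, top_eq_univ, card_compl] at h

theorem pow_mul_pow_le_of_insert_div_le [Fintype α] {γ : ℝ} (h0 : 0 < γ) (h1 : γ < 1)
    {π : Finset α → ℝ} (hpos : ∀ M, 0 < π M)
    (hprec : (1 - γ) ^ Fintype.card α ≤ π univ)
    (hmax : ∀ M i, i ∉ M → π (insert i M) / π M ≤ (1 - γ) / γ) (M : Finset α) :
    γ ^ (Fintype.card α - #M) * (1 - γ) ^ #M ≤ π M := by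
  set k := Fintype.card α - #M
  have hcard : Fintype.card α = k + #M := by
    have := card_le_univ M
    omega
  have hγ' : 0 < 1 - γ := sub_pos.mpr h1
  have hchain := le_pow_card_compl_mul_of_insert_le (div_pos hγ' h0).le
    (fun M i hi => (div_le_iff₀ (hpos M)).mp (hmax M i hi)) M
  have hprod : (1 - γ) ^ k * (γ ^ k * (1 - γ) ^ #M) ≤ (1 - γ) ^ k * π M := by
    rw [hcard, pow_add] at hprec
    have h := hprec.trans hchain
    rw [div_pow, div_mul_eq_mul_div, le_div_iff₀ (pow_pos h0 k)] at h
    linarith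
  exact le_of_mul_le_mul_left hprod (pow_pos hγ' k)

theorem stmt3_general (n : ℕ) (γ : ℝ) (h0 : 0 < γ) (h1 : γ < 1)
    (π : Finset (Fin n) → ℝ) (hpos : ∀ M : Finset (Fin n), 0 < π M)
    (hsum : ∑ M : Finset (Fin n), π M = 1)
    (hprec : (1 - γ) ^ n ≤ π Finset.univ)
    (hmax : ∀ (M : Finset (Fin n)) (i : Fin n), i ∉ M →
      π (insert i M) / π M ≤ (1 - γ) / γ) :
    ∀ M : Finset (Fin n), π M = γ ^ (n - M.card) * (1 - γ) ^ M.card := by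
  have hlow := pow_mul_pow_le_of_insert_div_le h0 h1 hpos (by simpa using hprec) hmax
  have hbinom : ∑ M : Finset (Fin n), γ ^ (n - #M) * (1 - γ) ^ #M = 1 := by
    simpa [mul_comm] using Fin.sum_pow_mul_eq_add_pow (1 - γ) γ
  intro M
  simpa using ((sum_eq_sum_iff_of_le fun M _ => hlow M).mp (by simpa [hsum] using hbinom)
    M (mem_univ M)).symm

/-- uniqueness of the optimal MIDR resampling distribution. -/
theorem stmt3 (n : ℕ) (hn : 1 ≤ n) (γ : ℝ) (h0 : 0 < γ) (h1 : γ < 1)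
    (π : Finset (Fin n) → ℝ) (hpos : ∀ M : Finset (Fin n), 0 < π M)
    (hsum : ∑ M : Finset (Fin n), π M = 1)
    (hprec : (1 - γ) ^ n ≤ π Finset.univ)
    (hmax : ∀ (M : Finset (Fin n)) (i : Fin n), i ∉ M →
      π (insert i M) / π M ≤ (1 - γ) / γ) :
    ∀ M : Finset (Fin n), π M = γ ^ (n - M.card) * (1 - γ) ^ M.card :=
  stmt3_general n γ h0 h1 π hpos hsum hprec hmax
end

section
/- Let π be a probability distribution on subsets of [n]. Suppose values w : P([n]) × [n] → ℝ≥0 satisfy the monotonicity property that Σ_{j∈M} w(M,j) ≥ Σ_{j∈M} w([n],j) for all M ⊆ [n]. Then Σ_{M⊆[n]} π(M) Σ_{j∈[n]} w(M,j) ≥ (min_{j∈[n]} Pr_{M∼π}(j ∈ M)) · Σ_{j∈[n]} w([n],j). (Welfare approximation lower bound for MIDR single-call reductions.) -/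
open Finset

theorem Finset.sum_mul_sum_mem_eq_sum_mul {ι R : Type*} [Fintype ι] [DecidableEq ι]
    [CommSemiring R] (π : Finset ι → R) (f : ι → R) :
    ∑ M : Finset ι, π M * ∑ j ∈ M, f j =
      ∑ j : ι, (∑ M ∈ univ.filter (fun M : Finset ι => j ∈ M), π M) * f j := by
  simp only [mul_sum, sum_mul, sum_filter]
  rw [sum_comm]
  refine sum_congr rfl fun M _ => ?_
  simp only [ite_mul, zero_mul]
  rw [← sum_filter, filter_mem_eq_inter, univ_inter]

theorem Finset.inf'_mul_sum_le_sum_mul {ι R : Type*} [Semiring R] [LinearOrder R]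
    [IsOrderedRing R] {s : Finset ι} (hs : s.Nonempty) (g f : ι → R) (hf : ∀ j ∈ s, 0 ≤ f j) :
    s.inf' hs g * ∑ j ∈ s, f j ≤ ∑ j ∈ s, g j * f j := by
  rw [mul_sum]
  exact sum_le_sum fun j hj => mul_le_mul_of_nonneg_right (inf'_le g hj) (hf j hj)

theorem stmt7_general (n : ℕ) [NeZero n] (π : Finset (Fin n) → ℝ)
    (hπ : ∀ M : Finset (Fin n), 0 ≤ π M)
    (w : Finset (Fin n) → Fin n → ℝ) (hw : ∀ M j, 0 ≤ w M j)
    (hmono : ∀ M : Finset (Fin n), ∑ j ∈ M, w Finset.univ j ≤ ∑ j ∈ M, w M j) :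
    (Finset.univ.inf' Finset.univ_nonempty
        (fun j : Fin n => ∑ M ∈ Finset.univ.filter (fun M : Finset (Fin n) => j ∈ M), π M)) *
      (∑ j : Fin n, w Finset.univ j) ≤
    ∑ M : Finset (Fin n), π M * ∑ j : Fin n, w M j := by
  calc _ ≤ ∑ j : Fin n,
          (∑ M ∈ univ.filter (fun M : Finset (Fin n) => j ∈ M), π M) * w univ j :=
        inf'_mul_sum_le_sum_mul _ _ _ fun j _ => hw univ j
    _ = ∑ M : Finset (Fin n), π M * ∑ j ∈ M, w univ j :=
        (sum_mul_sum_mem_eq_sum_mul π (w univ)).symm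
    _ ≤ ∑ M : Finset (Fin n), π M * ∑ j ∈ M, w M j :=
        sum_le_sum fun M _ => mul_le_mul_of_nonneg_left (hmono M) (hπ M)
    _ ≤ ∑ M : Finset (Fin n), π M * ∑ j : Fin n, w M j :=
        sum_le_sum fun M _ => mul_le_mul_of_nonneg_left
          (sum_le_sum_of_subset_of_nonneg (subset_univ M) fun j _ _ => hw M j) (hπ M)

/-- welfare approximation lower bound for MIDR single-call reductions. -/
theorem stmt7 (n : ℕ) [NeZero n] (π : Finset (Fin n) → ℝ)
    (hπ : ∀ M : Finset (Fin n), 0 ≤ π M)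
    (hsum : ∑ M : Finset (Fin n), π M = 1)
    (w : Finset (Fin n) → Fin n → ℝ) (hw : ∀ M j, 0 ≤ w M j)
    (hmono : ∀ M : Finset (Fin n), ∑ j ∈ M, w Finset.univ j ≤ ∑ j ∈ M, w M j) :
    (Finset.univ.inf' Finset.univ_nonempty
        (fun j : Fin n => ∑ M ∈ Finset.univ.filter (fun M : Finset (Fin n) => j ∈ M), π M)) *
      (∑ j : Fin n, w Finset.univ j) ≤
    ∑ M : Finset (Fin n), π M * ∑ j : Fin n, w M j :=
  stmt7_general n π hπ w hw hmono
end

section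
/- Let π and π̄ be probability distributions over subsets of [n] with all values positive, where π̄(M) = γ^{n−|M|}(1−γ)^{|M|}. If max_{i, M: i∉M} π(M∪{i})/π(M) < (1−γ)/γ, then max_i Pr_{π}(i ∉ M) > max_i Pr_{π̄}(i ∉ M) = γ. -/
/-!
Let `P = Pr_π(i ∉ M)` and `Q = Pr_π(i ∈ M)`. Pairing each `M ∌ i` with `insert i M` and summing
the ratio bound `γ π(M ∪ {i}) < (1 - γ) π(M)` gives `γ Q < (1 - γ) P`; with `P + Q = 1` this is
`γ < P`. For the product distribution, the coordinate `i` factors out and the remaining coordinates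
contribute `(γ + (1 - γ))^(n-1) = 1` by the binomial theorem.
-/

open Finset

namespace Finset

variable {α : Type*} [Fintype α] [DecidableEq α]

theorem filter_notMem_univ_eq_powerset_erase (i : α) :
    univ.filter (fun M : Finset α => i ∉ M) = (univ.erase i).powerset := by
  ext M
  simp [subset_erase]

theorem sum_univ_eq_sum_powerset_erase_add_sum_insert {β : Type*} [AddCommMonoid β]
    (f : Finset α → β) (i : α) :
    ∑ M, f M = ∑ M ∈ (univ.erase i).powerset, f M
      + ∑ M ∈ (univ.erase i).powerset, f (insert i M) := by
  rw [← sum_powerset_insert (notMem_erase i univ), insert_erase (mem_univ i), powerset_univ]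

theorem sum_filter_notMem_pow_mul_pow {R : Type*} [CommSemiring R] (a b : R) (i : α) :
    ∑ M ∈ univ.filter (fun M : Finset α => i ∉ M), b ^ (Fintype.card α - #M) * a ^ #M
      = b * (a + b) ^ (Fintype.card α - 1) := by
  have hcard : #(univ.erase i) = Fintype.card α - 1 := card_erase_of_mem (mem_univ i)
  have hpos : 0 < Fintype.card α := Fintype.card_pos_iff.mpr ⟨i⟩
  rw [filter_notMem_univ_eq_powerset_erase, ← hcard, ← sum_pow_mul_eq_add_pow, mul_sum]
  refine sum_congr rfl fun M hM => ?_
  have hM : #M ≤ #(univ.erase i) := card_le_card (mem_powerset.mp hM)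
  rw [show Fintype.card α - #M = (#(univ.erase i) - #M) + 1 by omega, pow_succ]
  ring

theorem lt_sum_filter_notMem_of_ratio_lt {γ : ℝ} (hγ : 0 < γ) (π : Finset α → ℝ)
    (hpos : ∀ M, 0 < π M) (hsum : ∑ M, π M = 1) (i : α)
    (hratio : ∀ M, i ∉ M → π (insert i M) / π M < (1 - γ) / γ) :
    γ < ∑ M ∈ univ.filter (fun M : Finset α => i ∉ M), π M := by
  rw [filter_notMem_univ_eq_powerset_erase]
  set P := ∑ M ∈ (univ.erase i).powerset, π M
  set Q := ∑ M ∈ (univ.erase i).powerset, π (insert i M)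
  have hPQ : P + Q = 1 := by rw [← hsum, sum_univ_eq_sum_powerset_erase_add_sum_insert π i]
  have hQP : γ * Q < (1 - γ) * P := by
    rw [mul_sum, mul_sum]
    refine sum_lt_sum_of_nonempty ⟨∅, empty_mem_powerset _⟩ fun M hM => ?_
    have hiM : i ∉ M := fun h => notMem_erase i univ (mem_powerset.mp hM h)
    have := hratio M hiM
    rw [div_lt_div_iff₀ (hpos M) hγ] at this
    linarith
  rw [show Q = 1 - P by linarith] at hQP
  linarith

end Finset

theorem stmt9_general (n : ℕ) (hn : 1 ≤ n) (γ : ℝ) (h0 : 0 < γ)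
    (π : Finset (Fin n) → ℝ) (hpos : ∀ M : Finset (Fin n), 0 < π M)
    (hsum : ∑ M : Finset (Fin n), π M = 1)
    (hmax : ∀ (M : Finset (Fin n)) (i : Fin n), i ∉ M →
      π (insert i M) / π M < (1 - γ) / γ) :
    (∀ i : Fin n,
      ∑ M ∈ Finset.univ.filter (fun M : Finset (Fin n) => i ∉ M),
        γ ^ (n - M.card) * (1 - γ) ^ M.card = γ) ∧
    ∃ i : Fin n,
      γ < ∑ M ∈ Finset.univ.filter (fun M : Finset (Fin n) => i ∉ M), π M := by
  refine ⟨fun i => ?_, ⟨0, hn⟩, lt_sum_filter_notMem_of_ratio_lt h0 π hpos hsum _ fun M => hmax M _⟩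
  simpa using sum_filter_notMem_pow_mul_pow (1 - γ) γ i

/-- smaller worst-case coefficient forces larger resampling probability. -/
theorem stmt9 (n : ℕ) (hn : 1 ≤ n) (γ : ℝ) (h0 : 0 < γ) (h1 : γ < 1)
    (π : Finset (Fin n) → ℝ) (hpos : ∀ M : Finset (Fin n), 0 < π M)
    (hsum : ∑ M : Finset (Fin n), π M = 1)
    (hmax : ∀ (M : Finset (Fin n)) (i : Fin n), i ∉ M →
      π (insert i M) / π M < (1 - γ) / γ) :
    (∀ i : Fin n,
      ∑ M ∈ Finset.univ.filter (fun M : Finset (Fin n) => i ∉ M),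
        γ ^ (n - M.card) * (1 - γ) ^ M.card = γ) ∧
    ∃ i : Fin n,
      γ < ∑ M ∈ Finset.univ.filter (fun M : Finset (Fin n) => i ∉ M), π M :=
  stmt9_general n hn γ h0 π hpos hsum hmax
end
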